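/- In a finite-horizon Markov potential game with total potential functions $\Phi_h^\pi$, if a deterministic policy $\pi^*$ satisfies that for each stage $h$ and state $s$, the action $a^*$ with $\pi_h^*(a^* \mid s) = 1$ maximizes $a \mapsto \Phi_h^{\pi^*_{h+1:H}}(s,a)$, then $\pi^*$ is a Markov perfect Nash equilibrium: for all $i, h, s$, $Q_{i,h}^{\pi^*}(s, a^*) \ge Q_{i,h}^{\pi^*}(s, a_i, a_{-i}^*)$ for all $a_i$. -/

import Mathlib

open Finset

variable {S : Type*} [Fintype S] {ι : Type*} [Fintype ι] [DecidableEq ι]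
  {A : ι → Type*} [∀ i, Fintype (A i)]

/-- Player `i`'s value function under a deterministic policy `π : ℕ → S → (∀ i, A i)` with
`k` stages to go (stages indexed `0, …, H-1`). -/
noncomputable def Vdet (P : ℕ → S → (∀ i, A i) → S → ℝ)
    (r : ι → ℕ → S → (∀ i, A i) → ℝ) (H : ℕ) (π : ℕ → S → ∀ i, A i) (i : ι) :
    ℕ → S → ℝ
  | 0 => fun _ => 0
  | (k + 1) => fun s => r i (H - (k + 1)) s (π (H - (k + 1)) s) +
      ∑ s', P (H - (k + 1)) s (π (H - (k + 1)) s) s' * Vdet P r H π i k s'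

/-- Player `i`'s action-value function at stage `H - (k+1)`. -/
noncomputable def Qdet (P : ℕ → S → (∀ i, A i) → S → ℝ)
    (r : ι → ℕ → S → (∀ i, A i) → ℝ) (H : ℕ) (π : ℕ → S → ∀ i, A i) (i : ι)
    (k : ℕ) (s : S) (a : ∀ i, A i) : ℝ :=
  r i (H - (k + 1)) s a + ∑ s', P (H - (k + 1)) s a s' * Vdet P r H π i k s'

/-- Total potential value under a deterministic policy, built from stage potentials `φ`. -/
noncomputable def PhiV (P : ℕ → S → (∀ i, A i) → S → ℝ)
    (φ : ℕ → S → (∀ i, A i) → ℝ) (H : ℕ) (π : ℕ → S → ∀ i, A i) : ℕ → S → ℝ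
  | 0 => fun _ => 0
  | (k + 1) => fun s => φ (H - (k + 1)) s (π (H - (k + 1)) s) +
      ∑ s', P (H - (k + 1)) s (π (H - (k + 1)) s) s' * PhiV P φ H π k s'

/-- Total potential function `Φ_h^π(s, a)` at stage `H - (k+1)`. -/
noncomputable def PhiQ (P : ℕ → S → (∀ i, A i) → S → ℝ)
    (φ : ℕ → S → (∀ i, A i) → ℝ) (H : ℕ) (π : ℕ → S → ∀ i, A i)
    (k : ℕ) (s : S) (a : ∀ i, A i) : ℝ :=
  φ (H - (k + 1)) s a + ∑ s', P (H - (k + 1)) s a s' * PhiV P φ H π k s'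

theorem stmt11_general (P : ℕ → S → (∀ i, A i) → S → ℝ) (r : ι → ℕ → S → (∀ i, A i) → ℝ)
    (H : ℕ) (φ : ℕ → S → (∀ i, A i) → ℝ)
    (hMPG : ∀ (π : ℕ → S → ∀ i, A i) (k : ℕ) (s : S) (i : ι) (a : ∀ j, A j) (ai' : A i),
      PhiQ P φ H π k s (Function.update a i ai') - PhiQ P φ H π k s a =
        Qdet P r H π i k s (Function.update a i ai') - Qdet P r H π i k s a)
    (πstar : ℕ → S → ∀ i, A i)
    (hmax : ∀ k < H, ∀ (s : S) (a : ∀ i, A i),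
      PhiQ P φ H πstar k s a ≤ PhiQ P φ H πstar k s (πstar (H - (k + 1)) s)) :
    ∀ (i : ι), ∀ k < H, ∀ (s : S) (ai : A i),
      Qdet P r H πstar i k s (Function.update (πstar (H - (k + 1)) s) i ai) ≤
        Qdet P r H πstar i k s (πstar (H - (k + 1)) s) := by
  intro i k hk s ai
  have hgain := hMPG πstar k s i (πstar (H - (k + 1)) s) ai
  have hmaximal := hmax k hk s (Function.update (πstar (H - (k + 1)) s) i ai)
  linarith

/-- In a Markov potential game, a deterministic policy that at each stage and state plays a
maximizer of the total potential `Φ_h^{π^*}(s, ·)` is a Markov perfect Nash equilibrium. -/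
theorem stmt11 (P : ℕ → S → (∀ i, A i) → S → ℝ) (r : ι → ℕ → S → (∀ i, A i) → ℝ)
    (H : ℕ) (φ : ℕ → S → (∀ i, A i) → ℝ)
    (hP_nonneg : ∀ h s a s', 0 ≤ P h s a s') (hP_sum : ∀ h s a, ∑ s', P h s a s' = 1)
    (hMPG : ∀ (π : ℕ → S → ∀ i, A i) (k : ℕ) (s : S) (i : ι) (a : ∀ j, A j) (ai' : A i),
      PhiQ P φ H π k s (Function.update a i ai') - PhiQ P φ H π k s a =
        Qdet P r H π i k s (Function.update a i ai') - Qdet P r H π i k s a)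
    (πstar : ℕ → S → ∀ i, A i)
    (hmax : ∀ k < H, ∀ (s : S) (a : ∀ i, A i),
      PhiQ P φ H πstar k s a ≤ PhiQ P φ H πstar k s (πstar (H - (k + 1)) s)) :
    ∀ (i : ι), ∀ k < H, ∀ (s : S) (ai : A i),
      Qdet P r H πstar i k s (Function.update (πstar (H - (k + 1)) s) i ai) ≤
        Qdet P r H πstar i k s (πstar (H - (k + 1)) s) :=
  stmt11_general P r H φ hMPG πstar hmax
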